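/- Suppose the triple $(p,q,r)$ of integers $>1$ satisfies $\frac{1}{p}+\frac{1}{q}+\frac{1}{r} < 1$. Assume the abc conjecture: for every $\varepsilon > 0$ there is $K_\varepsilon$ such that for all coprime positive integers $a, b, c$ with $a + b = c$, $c \leq K_\varepsilon \cdot \mathrm{rad}(abc)^{1+\varepsilon}$. Then the set of triples of coprime positive integers $(a,b,c)$ with $a + b = c$, $a$ being $p$-full, $b$ being $q$-full, and $c$ being $r$-full, is finite. -/
import Mathlib


/-- A positive integer is `m`-full if every prime dividing it does so to order at least `m`. -/
def IsPFull (m a : ℕ) : Prop := ∀ ℓ : ℕ, ℓ.Prime → ℓ ∣ a → ℓ ^ m ∣ a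

/-- The radical of `n`: the product of the distinct primes dividing `n`. -/
def rad (n : ℕ) : ℕ := n.primeFactors.prod id

lemma rad_mul_dvd (m n : ℕ) (hm : m ≠ 0) (hn : n ≠ 0) : rad (m * n) ∣ rad m * rad n := by
  classical
  unfold rad
  rw [Nat.primeFactors_mul hm hn, ← Finset.union_sdiff_self_eq_union,
    Finset.prod_union Finset.disjoint_sdiff]
  exact mul_dvd_mul_left _ (Finset.prod_dvd_prod_of_subset _ _ _ Finset.sdiff_subset)

lemma rad_pos (n : ℕ) : 0 < rad n := Finset.prod_pos fun ℓ hℓ => (Nat.prime_of_mem_primeFactors hℓ).pos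

lemma rad_pow_dvd {m a : ℕ} (ha : a ≠ 0) (h : IsPFull m a) : rad a ^ m ∣ a := by
  have key : a = ∏ ℓ ∈ a.primeFactors, ℓ ^ a.factorization ℓ := by
    conv_lhs => rw [← Nat.factorization_prod_pow_eq_self ha]
    rw [Finsupp.prod, Nat.support_factorization]
  rw [rad, ← Finset.prod_pow]
  conv_rhs => rw [key]
  apply Finset.prod_dvd_prod_of_dvd
  intro ℓ hℓ
  have hpr := Nat.prime_of_mem_primeFactors hℓ
  have hdvd := Nat.dvd_of_mem_primeFactors hℓ
  exact pow_dvd_pow _ ((Nat.Prime.pow_dvd_iff_le_factorization hpr ha).mp (h ℓ hpr hdvd))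

/-- The abc conjecture implies the Orbifold Mordell conjecture for `(ℙ¹ ∣ Δ)` with
multiplicities `(p,q,r)` satisfying `1/p + 1/q + 1/r < 1`: there are only finitely many
triples of coprime positive integers `(a,b,c)` with `a + b = c`, `a` `p`-full,
`b` `q`-full and `c` `r`-full. -/
theorem abc_implies_orbifold_mordell (p q r : ℕ) (hp : 1 < p) (hq : 1 < q) (hr : 1 < r)
    (hpqr : 1/(p:ℚ) + 1/(q:ℚ) + 1/(r:ℚ) < 1)
    (abc : ∀ ε : ℝ, 0 < ε → ∃ K : ℝ, ∀ a b c : ℕ, 0 < a → 0 < b → 0 < c →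
      Nat.Coprime a b → a + b = c → (c : ℝ) ≤ K * (rad (a * b * c) : ℝ) ^ ((1 : ℝ) + ε)) :
    {x : ℕ × ℕ × ℕ | 0 < x.1 ∧ 0 < x.2.1 ∧ 0 < x.2.2 ∧ Nat.Coprime x.1 x.2.1 ∧
      x.1 + x.2.1 = x.2.2 ∧ IsPFull p x.1 ∧ IsPFull q x.2.1 ∧ IsPFull r x.2.2}.Finite := by
  -- the integer form of the exponent inequality
  have hp0 : (0:ℚ) < p := by exact_mod_cast (Nat.zero_lt_one.trans hp)
  have hq0 : (0:ℚ) < q := by exact_mod_cast (Nat.zero_lt_one.trans hq)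
  have hr0 : (0:ℚ) < r := by exact_mod_cast (Nat.zero_lt_one.trans hr)
  have hSNQ : (q:ℚ)*r + p*r + p*q < p*q*r := by
    have e : (q:ℚ)*r + (p:ℚ)*r + (p:ℚ)*q = ((p:ℚ)*q*r) * (1/p + 1/q + 1/r) := by
      field_simp
    rw [e]
    calc ((p:ℚ)*q*r) * (1/p + 1/q + 1/r) < ((p:ℚ)*q*r) * 1 :=
          mul_lt_mul_of_pos_left hpqr (by positivity)
      _ = (p:ℚ)*q*r := mul_one _
  have hSN : q*r + p*r + p*q < p*q*r := by exact_mod_cast hSNQ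
  set S : ℕ := q*r + p*r + p*q with hSdef
  set N : ℕ := p*q*r with hNdef
  have hSpos : 0 < S := by positivity
  have hNpos : 0 < N := by positivity
  -- choose epsilon
  set ε : ℝ := ((N:ℝ) - S) / (2*S) with hεdef
  have hSNR : (S:ℝ) < N := by exact_mod_cast hSN
  have hSR : (0:ℝ) < S := by exact_mod_cast hSpos
  have hNR : (0:ℝ) < N := by exact_mod_cast hNpos
  have hε : 0 < ε := by
    apply div_pos (by linarith) (by linarith)
  obtain ⟨K, hK⟩ := abc ε hε
  set t : ℝ := (S/N) * (1+ε) with htdef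
  have ht0 : 0 ≤ t := by positivity
  have ht1 : t < 1 := by
    rw [htdef, hεdef]
    rw [div_mul_eq_mul_div, div_lt_one hNR]
    have : (S:ℝ) * (1 + ((N:ℝ) - S)/(2*S)) = S + ((N:ℝ) - S)/2 := by
      field_simp
    rw [this]; linarith
  set C : ℝ := (max K 1) ^ ((1:ℝ)/(1-t)) with hCdef
  set M : ℕ := ⌊C⌋₊ with hMdef
  apply Set.Finite.subset (Set.finite_Iic ((M, M, M) : ℕ × ℕ × ℕ))
  rintro ⟨a, b, c⟩ ⟨ha, hb, hc, hcop, habc, hfa, hfb, hfc⟩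
  -- basic bounds
  simp only [Set.mem_setOf_eq] at habc
  have hac : a ≤ c := habc ▸ Nat.le_add_right a b
  have hbc : b ≤ c := habc ▸ Nat.le_add_left b a
  -- the key radical bound
  have hradc : rad (a*b*c) ^ N ≤ c ^ S := by
    have h1 : rad (a*b*c) ∣ rad a * rad b * rad c :=
      ((rad_mul_dvd (a*b) c (by positivity) hc.ne').trans
        (mul_dvd_mul_right (rad_mul_dvd a b ha.ne' hb.ne') _))
    have h2 : rad (a*b*c) ≤ rad a * rad b * rad c :=
      Nat.le_of_dvd (by have := rad_pos a; have := rad_pos b; have := rad_pos c; positivity) h1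
    calc rad (a*b*c) ^ N ≤ (rad a * rad b * rad c) ^ N := Nat.pow_le_pow_left h2 N
      _ = (rad a ^ p) ^ (q*r) * (rad b ^ q) ^ (p*r) * (rad c ^ r) ^ (p*q) := by
          rw [hNdef]; ring
      _ ≤ a ^ (q*r) * b ^ (p*r) * c ^ (p*q) := by
          gcongr
          · exact Nat.le_of_dvd ha (rad_pow_dvd ha.ne' hfa)
          · exact Nat.le_of_dvd hb (rad_pow_dvd hb.ne' hfb)
          · exact Nat.le_of_dvd hc (rad_pow_dvd hc.ne' hfc)
      _ ≤ c ^ (q*r) * c ^ (p*r) * c ^ (p*q) := by gcongr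
      _ = c ^ S := by rw [hSdef, ← pow_add, ← pow_add]
  -- pass to the reals
  have hc1 : (1:ℝ) ≤ (c:ℝ) := by exact_mod_cast hc
  have hcpos : (0:ℝ) < c := by linarith
  have hradR : (rad (a*b*c) : ℝ) ≤ (c:ℝ) ^ ((S:ℝ)/N) := by
    have h1 : ((rad (a*b*c) : ℝ)) ^ (N:ℝ) ≤ ((c:ℝ)) ^ (S:ℝ) := by
      rw [Real.rpow_natCast, Real.rpow_natCast]; exact_mod_cast hradc
    have h2 := Real.rpow_le_rpow (by positivity) h1 (by positivity : (0:ℝ) ≤ 1/N)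
    rwa [← Real.rpow_mul (by positivity), ← Real.rpow_mul hcpos.le,
      mul_one_div, div_self hNR.ne', Real.rpow_one, mul_one_div] at h2
  have hcK : (c:ℝ) ≤ K * (c:ℝ) ^ t := by
    have h1 := hK a b c ha hb hc hcop habc
    have h2 : (rad (a*b*c) : ℝ) ^ ((1:ℝ)+ε) ≤ (c:ℝ) ^ t := by
      have := Real.rpow_le_rpow (by positivity) hradR (by positivity : (0:ℝ) ≤ 1+ε)
      rwa [← Real.rpow_mul hcpos.le] at this
    calc (c:ℝ) ≤ K * (rad (a*b*c) : ℝ) ^ ((1:ℝ)+ε) := h1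
      _ ≤ K * (c:ℝ) ^ t := by
          rcases le_or_gt K 0 with hK0 | hK0
          · exfalso
            have : K * (rad (a*b*c) : ℝ) ^ ((1:ℝ)+ε) ≤ 0 :=
              mul_nonpos_of_nonpos_of_nonneg hK0 (by positivity)
            linarith
          · exact mul_le_mul_of_nonneg_left h2 hK0.le
  have hct : (0:ℝ) < (c:ℝ) ^ t := Real.rpow_pos_of_pos hcpos t
  have hsub : (c:ℝ) ^ ((1:ℝ) - t) ≤ max K 1 := by
    rw [Real.rpow_sub hcpos, Real.rpow_one, div_le_iff₀ hct]
    exact hcK.trans (mul_le_mul_of_nonneg_right (le_max_left _ _) hct.le)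
  have hcC : (c:ℝ) ≤ C := by
    have h1t : (0:ℝ) < 1 - t := by linarith
    have e : (c:ℝ) = ((c:ℝ) ^ ((1:ℝ) - t)) ^ ((1:ℝ)/(1-t)) := by
      rw [← Real.rpow_mul hcpos.le, mul_one_div, div_self h1t.ne', Real.rpow_one]
    rw [e, hCdef]
    exact Real.rpow_le_rpow (by positivity) hsub (by positivity)
  have hcM : c ≤ M := Nat.le_floor hcC
  exact Set.mem_Iic.mpr ⟨hac.trans hcM, hbc.trans hcM, hcM⟩
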